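/- arXiv:1808.03929 — 3 statements merged into one kernel-verified Lean document; each statement's English description precedes it below -/
import Mathlib

section
/- Fix a state-measure flow 𝛍. For all n ≥ k ≥ 0, the finite-horizon optimal value function J_k^n(·, λβ^k) is continuous and bounded on 𝖷 with sup-norm at most e^{λK ζ_{k,n}}, where ζ_{k,n} = Σ_{t=k}^n β^t < 1/(1−β); moreover it satisfies the backward recursion J_n^n(x, λβ^n) = inf_{a∈𝖠} e^{λβ^n c_n(x,a)} and J_k^n(x, λβ^k) = inf_{a∈𝖠} [e^{λβ^k c_k(x,a)} ∫_𝖷 J_{k+1}^n(y, λβ^{k+1}) p_k(dy|x,a)] for k < n. -/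
open MeasureTheory ProbabilityTheory Filter Topology
open scoped ENNReal

namespace RSMFG

variable {X A : Type*} [MeasurableSpace X] [MeasurableSpace A]

/-- Histories of length `t` for the single-agent problem: past state-action pairs and the
current state. -/
abbrev Hist (X A : Type*) (t : ℕ) : Type _ := (Fin t → X × A) × X

/-- Extending a history by an action and a next state. -/
def extHist {t : ℕ} (h : Hist X A t) (a : A) (y : X) : Hist X A (t + 1) :=
  (Fin.snoc h.1 (h.2, a), y)

/-- A (history-dependent, randomized) policy. -/
abbrev Pol (X A : Type*) [MeasurableSpace X] [MeasurableSpace A] :=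
  {π : (t : ℕ) → Kernel (Hist X A t) A // ∀ t, IsMarkovKernel (π t)}

/-- A Markov (randomized) policy. -/
abbrev MPol (X A : Type*) [MeasurableSpace X] [MeasurableSpace A] :=
  {π : ℕ → Kernel X A // ∀ t, IsMarkovKernel (π t)}

/-- A Markov policy regarded as a history-dependent policy. -/
def toPol (π : ℕ → Kernel X A) (t : ℕ) : Kernel (Hist X A t) A :=
  (π t).comap Prod.snd measurable_snd

/-- The law of the history up to time `t` (Ionescu–Tulcea finite-dimensional law):
`x(0) ∼ μ₀`, `a(t) ∼ π_t(·|history)`, `x(t+1) ∼ p_t(·|x(t),a(t))`. -/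
noncomputable def traj (μ₀ : Measure X) (pk : ℕ → X → A → Measure X)
    (π : (t : ℕ) → Kernel (Hist X A t) A) : (t : ℕ) → Measure (Hist X A t)
  | 0 => μ₀.map fun x => (fun i => i.elim0, x)
  | t + 1 => (traj μ₀ pk π t).bind fun h =>
      ((π t) h).bind fun a => (pk t h.2 a).map (extHist h a)

/-- Finite-horizon risk-sensitive cost `E[exp(λ Σ_{t=0}^n β^t c_t(x(t),a(t)))]`. -/
noncomputable def Jfin (lam β : ℝ) (cst : ℕ → X → A → ℝ) (μ₀ : Measure X)
    (pk : ℕ → X → A → Measure X) (π : (t : ℕ) → Kernel (Hist X A t) A) (n : ℕ) : ℝ :=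
  ∫ h, Real.exp (lam * ∑ i : Fin (n + 1), β ^ (i : ℕ) * cst i (h.1 i).1 (h.1 i).2)
    ∂(traj μ₀ pk π (n + 1))

/-- Infinite-horizon risk-sensitive cost `E[exp(λ Σ_{t=0}^∞ β^t c_t(x(t),a(t)))]`
(monotone limit of the finite-horizon costs, since the one-stage costs are nonnegative). -/
noncomputable def Jinf (lam β : ℝ) (cst : ℕ → X → A → ℝ) (μ₀ : Measure X)
    (pk : ℕ → X → A → Measure X) (π : (t : ℕ) → Kernel (Hist X A t) A) : ℝ :=
  ⨆ n, Jfin lam β cst μ₀ pk π n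

/-- The law of the state `x(t)` under a policy. -/
noncomputable def stateLaw (μ₀ : Measure X) (pk : ℕ → X → A → Measure X)
    (π : (t : ℕ) → Kernel (Hist X A t) A) (t : ℕ) : Measure X :=
  (traj μ₀ pk π t).map Prod.snd

/-- Finite-horizon conditional risk-sensitive cost of a Markov policy:
`Vfin β cst pk π m k γ x = E^π[exp(γ Σ_{t=k}^{k+m} β^{t−k} c_t(x(t),a(t))) | x(k) = x]`,
defined through the (exact) multiplicative dynamic-programming recursion. -/
noncomputable def Vfin (β : ℝ) (cst : ℕ → X → A → ℝ) (pk : ℕ → X → A → Measure X)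
    (π : ℕ → Kernel X A) : ℕ → ℕ → ℝ → X → ℝ
  | 0, k, γ, x => ∫ a, Real.exp (γ * cst k x a) ∂((π k) x)
  | m + 1, k, γ, x => ∫ a, Real.exp (γ * cst k x a) *
      ∫ y, Vfin β cst pk π m (k + 1) (γ * β) y ∂(pk k x a) ∂((π k) x)

/-- Infinite-horizon conditional risk-sensitive cost of a Markov policy
`J_k(π,x,γ) = E^π[exp(γ Σ_{t=k}^{∞} β^{t−k} c_t(x(t),a(t))) | x(k) = x]`. -/
noncomputable def Vinf (β : ℝ) (cst : ℕ → X → A → ℝ) (pk : ℕ → X → A → Measure X)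
    (π : ℕ → Kernel X A) (k : ℕ) (γ : ℝ) (x : X) : ℝ :=
  ⨆ m, Vfin β cst pk π m k γ x

/-- The optimal finite-horizon (horizon `n`) risk-sensitive value function at time `k`:
`J_k^n(x, λβ^k) = inf over Markov policies of E^π[exp(λβ^k Σ_{t=k}^n β^{t−k} c_t)|x(k)=x]`. -/
noncomputable def JoptFin (β lam : ℝ) (cst : ℕ → X → A → ℝ)
    (pk : ℕ → X → A → Measure X) (k n : ℕ) (x : X) : ℝ :=
  ⨅ π : MPol X A, Vfin β cst pk π.1 (n - k) k (lam * β ^ k) x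

/-!
The optimal value is computed by the Bellman recursion
`W ↦ inf_a e^{γ c(x,a)} ∫ W(y) p(dy|x,a)`, with `γ` multiplied by `β` at each stage. This
recursion maps nonnegative bounded continuous functions to such functions, because integrals of
bounded continuous functions against a weakly continuous kernel depend continuously on `(x, a)`
and an infimum over the compact action space of a jointly continuous function is continuous.
Every Markov policy does at least as badly as the recursion. Conversely, for each `x` the open set
of `ε`-minimising actions meets a fixed dense sequence, and choosing the first such element gives a
measurable `ε`-minimising selector at every stage; composing the selectors gives Markov policies
that are `ε`-optimal.
-/

open Function Set

theorem continuous_iInf_of_compactSpace {X A α : Type*} [TopologicalSpace X] [TopologicalSpace A]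
    [CompactSpace A] [ConditionallyCompleteLinearOrder α] [TopologicalSpace α] [OrderTopology α]
    {f : X → A → α} (hf : Continuous ↿f) : Continuous fun x => ⨅ a, f x a := by
  have h := isCompact_univ.continuous_sInf hf
  simp only [image_univ] at h
  exact h

theorem exists_measurable_le_iInf_add {X A : Type*} [TopologicalSpace X] [MeasurableSpace X]
    [OpensMeasurableSpace X] [TopologicalSpace A] [CompactSpace A]
    [TopologicalSpace.SeparableSpace A] [Nonempty A] [MeasurableSpace A]
    {f : X → A → ℝ} (hf : Continuous ↿f) {ε : ℝ} (hε : 0 < ε) :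
    ∃ σ : X → A, Measurable σ ∧ ∀ x, f x (σ x) ≤ (⨅ a, f x a) + ε := by
  let D := TopologicalSpace.denseSeq A
  have hinf : Continuous fun x => ⨅ a, f x a := continuous_iInf_of_compactSpace hf
  have hopen : ∀ x, IsOpen {a | f x a < (⨅ a, f x a) + ε} := fun x =>
    isOpen_lt (hf.comp (.prodMk_right x)) continuous_const
  have hD : ∀ x, ∃ i, f x (D i) < (⨅ a, f x a) + ε := fun x =>
    (TopologicalSpace.denseRange_denseSeq A).exists_mem_open (hopen x)
      (exists_lt_of_ciInf_lt (lt_add_of_pos_right _ hε))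
  have hmeas : ∀ i, MeasurableSet {x | f x (D i) < (⨅ a, f x a) + ε} := fun i =>
    (isOpen_lt (hf.comp (.prodMk_left (D i))) (hinf.add continuous_const)).measurableSet
  exact ⟨fun x => D (Nat.find (hD x)), measurable_from_nat.comp (measurable_find hD hmeas),
    fun x => (Nat.find_spec (hD x)).le⟩

theorem _root_.Measurable.integrable_of_mem_Icc {α : Type*} [MeasurableSpace α] {μ : Measure α}
    [IsFiniteMeasure μ] {f : α → ℝ} (hf : Measurable f) {B : ℝ} (hB : ∀ a, f a ∈ Icc 0 B) :
    Integrable f μ :=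
  .of_bound hf.aestronglyMeasurable B <| .of_forall fun a => by
    rw [Real.norm_of_nonneg (hB a).1]; exact (hB a).2

section Integral

variable {α : Type*} [MeasurableSpace α] {μ : Measure α} [IsProbabilityMeasure μ] {f : α → ℝ}

theorem integral_le_of_forall_le (hf : Integrable f μ) {C : ℝ} (h : ∀ a, f a ≤ C) :
    ∫ a, f a ∂μ ≤ C := by
  simpa using integral_mono hf (integrable_const C) h

theorem ciInf_le_integral (hf : Integrable f μ) (hbdd : BddBelow (range f)) :
    ⨅ a, f a ≤ ∫ a, f a ∂μ := by
  simpa using integral_mono (integrable_const _) hf fun a => ciInf_le hbdd a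

end Integral

section WeakConvergence

variable {X Z : Type*} [TopologicalSpace X] [MeasurableSpace X] [TopologicalSpace Z]

theorem _root_.Continuous.continuous_integral [OpensMeasurableSpace X]
    {g : Z → ProbabilityMeasure X} (hg : Continuous g) {f : X → ℝ} (hf : Continuous f) {C : ℝ} (hC : ∀ x, |f x| ≤ C) :
    Continuous fun z => ∫ y, f y ∂(g z : Measure X) :=
  (ProbabilityMeasure.continuous_integral_boundedContinuousFunction
    (.ofNormedAddCommGroup f hf C hC)).comp hg

variable [BorelSpace X] [TopologicalSpace.PseudoMetrizableSpace X] [MeasurableSpace Z]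
  [OpensMeasurableSpace Z]

/-- By the portmanteau theorem, `z ↦ g z s` is lower semicontinuous for open `s`, and open sets
form a π-system generating the Borel σ-algebra. -/
theorem _root_.Continuous.measurable_toMeasure {g : Z → ProbabilityMeasure X} (hg : Continuous g) :
    Measurable fun z => (g z : Measure X) := by
  refine .measure_of_isPiSystem_of_isProbabilityMeasure BorelSpace.measurable_eq isPiSystem_isOpen
    fun s hs => LowerSemicontinuous.measurable fun z b hb => ?_
  exact eventually_lt_of_lt_liminf
    (hb.trans_le (ProbabilityMeasure.le_liminf_measure_open_of_tendsto (hg.tendsto z) hs))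

theorem _root_.Continuous.measurable_integral {g : Z → ProbabilityMeasure X} (hg : Continuous g)
    {f : X → ℝ} (hf : Measurable f) : Measurable fun z => ∫ y, f y ∂(g z : Measure X) :=
  (hf.stronglyMeasurable.integral_kernel (κ := ⟨_, hg.measurable_toMeasure⟩)).measurable

end WeakConvergence

theorem sum_Icc_pow_eq_pow_mul_geom_sum {R : Type*} [CommSemiring R] (x : R) {k n : ℕ}
    (hkn : k ≤ n) :
    ∑ t ∈ Finset.Icc k n, x ^ t = x ^ k * ∑ j ∈ Finset.range (n - k + 1), x ^ j := by
  rw [← Finset.Ico_add_one_right_eq_Icc, Finset.sum_Ico_eq_sum_range, Finset.mul_sum,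
    show n + 1 - k = n - k + 1 by omega]
  simp only [pow_add]

theorem sum_Icc_pow_lt_one_div {β : ℝ} (hβ0 : 0 < β) (hβ1 : β < 1) (k n : ℕ) :
    ∑ t ∈ Finset.Icc k n, β ^ t < 1 / (1 - β) :=
  calc ∑ t ∈ Finset.Icc k n, β ^ t ≤ ∑ t ∈ Finset.range (n + 1), β ^ t :=
        Finset.sum_le_sum_of_subset_of_nonneg
          (fun t ht => Finset.mem_range.2 (Nat.lt_succ_of_le (Finset.mem_Icc.1 ht).2))
          fun _ _ _ => pow_nonneg hβ0.le _
    _ < 1 / (1 - β) := by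
        rw [lt_div_iff₀ (sub_pos.2 hβ1), geom_sum_mul_neg]
        exact sub_lt_self 1 (pow_pos hβ0 _)

theorem exp_mul_exp_mul_geom_sum (γ β K : ℝ) (m : ℕ) :
    Real.exp (γ * K) * Real.exp (γ * β * K * ∑ j ∈ Finset.range (m + 1), β ^ j) =
      Real.exp (γ * K * ∑ j ∈ Finset.range (m + 2), β ^ j) := by
  rw [← Real.exp_add, geom_sum_succ (n := m + 1)]
  ring_nf

theorem one_apply_mem_Icc {X : Type*} (y : X) : (1 : X → ℝ) y ∈ Icc 0 1 :=
  right_mem_Icc.2 zero_le_one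

section Stage

variable {X A : Type*} [MeasurableSpace X] {c : X → A → ℝ} {Q : X → A → ProbabilityMeasure X}
  {γ K B δ : ℝ} {V V' : X → ℝ}

noncomputable def stageValue (c : X → A → ℝ) (Q : X → A → ProbabilityMeasure X) (γ : ℝ)
    (V : X → ℝ) (x : X) (a : A) : ℝ :=
  Real.exp (γ * c x a) * ∫ y, V y ∂(Q x a : Measure X)

@[simp]
theorem stageValue_one (x : X) (a : A) : stageValue c Q γ 1 x a = Real.exp (γ * c x a) := by
  simp [stageValue]

theorem stageValue_mono {x : X} {a : A} (hV : Integrable V (Q x a)) (hV' : Integrable V' (Q x a))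
    (h : V ≤ V') : stageValue c Q γ V x a ≤ stageValue c Q γ V' x a :=
  mul_le_mul_of_nonneg_left (integral_mono hV hV' h) (Real.exp_pos _).le

theorem stageValue_mem_Icc (hγ : 0 ≤ γ) (hcK : ∀ x a, c x a ≤ K) (hVm : Measurable V)
    (hV : ∀ y, V y ∈ Icc 0 B) (x : X) (a : A) :
    stageValue c Q γ V x a ∈ Icc 0 (Real.exp (γ * K) * B) := by
  have hV0 : 0 ≤ ∫ y, V y ∂(Q x a : Measure X) := integral_nonneg fun y => (hV y).1
  refine ⟨mul_nonneg (Real.exp_pos _).le hV0, mul_le_mul (by gcongr; exact hcK x a) ?_ hV0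
    (Real.exp_pos _).le⟩
  exact integral_le_of_forall_le (hVm.integrable_of_mem_Icc hV) fun y => (hV y).2

theorem stageValue_le_add (hγ : 0 ≤ γ) (hcK : ∀ x a, c x a ≤ K) {x : X} {a : A}
    (hV : Integrable V (Q x a)) (hV' : Integrable V' (Q x a)) (hδ : 0 ≤ δ)
    (h : ∀ y, V y ≤ V' y + δ) :
    stageValue c Q γ V x a ≤ stageValue c Q γ V' x a + Real.exp (γ * K) * δ :=
  calc stageValue c Q γ V x a ≤ stageValue c Q γ (V' + fun _ => δ) x a :=
        stageValue_mono hV (hV'.add (integrable_const δ)) h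
    _ = stageValue c Q γ V' x a + Real.exp (γ * c x a) * δ := by
        simp [stageValue, integral_add hV' (integrable_const δ), mul_add]
    _ ≤ stageValue c Q γ V' x a + Real.exp (γ * K) * δ := by
        gcongr; exact hcK x a

theorem iInf_stageValue_mem_Icc [Nonempty A] (hγ : 0 ≤ γ) (hcK : ∀ x a, c x a ≤ K)
    (hVm : Measurable V) (hV : ∀ y, V y ∈ Icc 0 B) (x : X) :
    ⨅ a, stageValue c Q γ V x a ∈ Icc 0 (Real.exp (γ * K) * B) :=
  ⟨le_ciInf fun a => (stageValue_mem_Icc hγ hcK hVm hV x a).1,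
    (ciInf_le ⟨0, forall_mem_range.2 fun a => (stageValue_mem_Icc hγ hcK hVm hV x a).1⟩
      (Classical.arbitrary A)).trans (stageValue_mem_Icc hγ hcK hVm hV x _).2⟩

end Stage

section Continuity

variable {X A : Type*} [TopologicalSpace X] [MeasurableSpace X] [OpensMeasurableSpace X]
  [TopologicalSpace A] {c : X → A → ℝ} {Q : X → A → ProbabilityMeasure X} {γ K B B' δ : ℝ}
  {V V' : X → ℝ}

theorem continuous_stageValue (hc : Continuous ↿c) (hQ : Continuous ↿Q) (hVc : Continuous V)
    (hV : ∀ y, V y ∈ Icc 0 B) : Continuous ↿(stageValue c Q γ V) :=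
  (Real.continuous_exp.comp (continuous_const.mul hc)).mul <|
    hQ.continuous_integral hVc fun y => by rw [abs_of_nonneg (hV y).1]; exact (hV y).2

theorem exists_measurable_stageValue_le [CompactSpace A] [TopologicalSpace.SeparableSpace A]
    [Nonempty A] [MeasurableSpace A] (hγ : 0 ≤ γ) (hcK : ∀ x a, c x a ≤ K)
    (hc : Continuous ↿c) (hQ : Continuous ↿Q) (hVc : Continuous V) (hV'm : Measurable V')
    (hV : ∀ y, V y ∈ Icc 0 B) (hV' : ∀ y, V' y ∈ Icc 0 B') (hδ : 0 ≤ δ)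
    (h : ∀ y, V' y ≤ V y + δ) {ε : ℝ} (hε : 0 < ε) :
    ∃ σ : X → A, Measurable σ ∧ ∀ x,
      stageValue c Q γ V' x (σ x) ≤ (⨅ a, stageValue c Q γ V x a) + ε + Real.exp (γ * K) * δ := by
  obtain ⟨σ, hσ, hσle⟩ := exists_measurable_le_iInf_add (f := stageValue c Q γ V)
    (continuous_stageValue hc hQ hVc hV) hε
  refine ⟨σ, hσ, fun x => ?_⟩
  have := stageValue_le_add (Q := Q) (x := x) (a := σ x) hγ hcK (hV'm.integrable_of_mem_Icc hV')
    (hVc.measurable.integrable_of_mem_Icc hV) hδ h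
  linarith [hσle x]

end Continuity

section Measurability

variable {X A : Type*} [TopologicalSpace X] [MeasurableSpace X] [BorelSpace X]
  [TopologicalSpace.PseudoMetrizableSpace X] [TopologicalSpace A] [MeasurableSpace A]
  [OpensMeasurableSpace A] [SecondCountableTopology A]
  {c : X → A → ℝ} {Q : X → A → ProbabilityMeasure X} {γ K B B' δ : ℝ} {V V' : X → ℝ}

theorem measurable_stageValue (hc : Continuous ↿c) (hQ : Continuous ↿Q) (hV : Measurable V) :
    Measurable ↿(stageValue c Q γ V) :=
  (Real.continuous_exp.comp (continuous_const.mul hc)).measurable.mul (hQ.measurable_integral hV)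

theorem integrable_stageValue (hγ : 0 ≤ γ) (hcK : ∀ x a, c x a ≤ K) (hc : Continuous ↿c)
    (hQ : Continuous ↿Q) (hVm : Measurable V) (hV : ∀ y, V y ∈ Icc 0 B) (x : X)
    (ν : Measure A) [IsFiniteMeasure ν] : Integrable (stageValue c Q γ V x) ν :=
  ((measurable_stageValue hc hQ hVm).comp measurable_prodMk_left).integrable_of_mem_Icc
    (stageValue_mem_Icc hγ hcK hVm hV x)

theorem integral_stageValue_deterministic (hc : Continuous ↿c) (hQ : Continuous ↿Q)
    (hVm : Measurable V) {σ : X → A} (hσ : Measurable σ) (x : X) :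
    ∫ a, stageValue c Q γ V x a ∂Kernel.deterministic σ hσ x = stageValue c Q γ V x (σ x) :=
  Kernel.integral_deterministic' hσ
    ((measurable_stageValue hc hQ hVm).comp measurable_prodMk_left).stronglyMeasurable

theorem measurable_integral_stageValue (κ : Kernel X A) [IsSFiniteKernel κ] (hc : Continuous ↿c)
    (hQ : Continuous ↿Q) (hVm : Measurable V) :
    Measurable fun x => ∫ a, stageValue c Q γ V x a ∂κ x :=
  (measurable_stageValue hc hQ hVm).stronglyMeasurable.integral_kernel_prod_right'.measurable

theorem integral_stageValue_mem_Icc (hγ : 0 ≤ γ) (hcK : ∀ x a, c x a ≤ K) (hc : Continuous ↿c)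
    (hQ : Continuous ↿Q) (hVm : Measurable V) (hV : ∀ y, V y ∈ Icc 0 B) (x : X)
    (ν : Measure A) [IsProbabilityMeasure ν] :
    ∫ a, stageValue c Q γ V x a ∂ν ∈ Icc 0 (Real.exp (γ * K) * B) :=
  ⟨integral_nonneg fun a => (stageValue_mem_Icc hγ hcK hVm hV x a).1,
    integral_le_of_forall_le (integrable_stageValue hγ hcK hc hQ hVm hV x ν)
      fun a => (stageValue_mem_Icc hγ hcK hVm hV x a).2⟩

theorem iInf_stageValue_le_integral (hγ : 0 ≤ γ) (hcK : ∀ x a, c x a ≤ K) (hc : Continuous ↿c)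
    (hQ : Continuous ↿Q) (hVm : Measurable V) (hV'm : Measurable V')
    (hV : ∀ y, V y ∈ Icc 0 B) (hV' : ∀ y, V' y ∈ Icc 0 B') (h : V ≤ V') (x : X)
    (ν : Measure A) [IsProbabilityMeasure ν] :
    ⨅ a, stageValue c Q γ V x a ≤ ∫ a, stageValue c Q γ V' x a ∂ν :=
  (ciInf_le_integral (integrable_stageValue hγ hcK hc hQ hVm hV x ν)
    ⟨0, forall_mem_range.2 fun a => (stageValue_mem_Icc hγ hcK hVm hV x a).1⟩).trans <|
    integral_mono (integrable_stageValue hγ hcK hc hQ hVm hV x ν)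
      (integrable_stageValue hγ hcK hc hQ hV'm hV' x ν) fun _ =>
      stageValue_mono (hVm.integrable_of_mem_Icc hV) (hV'm.integrable_of_mem_Icc hV') h

end Measurability

structure IsRegularModel {X A : Type*} [TopologicalSpace X] [MeasurableSpace X]
    [OpensMeasurableSpace X] [TopologicalSpace A]
    (K : ℝ) (cst : ℕ → X → A → ℝ) (P : ℕ → X → A → ProbabilityMeasure X) : Prop where
  continuous_cost (t : ℕ) : Continuous ↿(cst t)
  cost_le (t : ℕ) (x : X) (a : A) : cst t x a ≤ K
  continuous_transition (t : ℕ) : Continuous ↿(P t)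

/-- The optimal value at time `k` over the `m + 1` stages `k, …, k + m`, with risk factor `γ` at
time `k`. -/
noncomputable def optValue {X A : Type*} [MeasurableSpace X] (β : ℝ) (cst : ℕ → X → A → ℝ)
    (P : ℕ → X → A → ProbabilityMeasure X) : ℕ → ℕ → ℝ → X → ℝ
  | 0, k, γ, x => ⨅ a, Real.exp (γ * cst k x a)
  | m + 1, k, γ, x => ⨅ a, stageValue (cst k) (P k) γ (optValue β cst P m (k + 1) (γ * β)) x a

section Recursion

variable {X A : Type*} [MeasurableSpace X] {β : ℝ} {cst : ℕ → X → A → ℝ}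
  {P : ℕ → X → A → ProbabilityMeasure X}

theorem optValue_zero_eq (k : ℕ) (γ : ℝ) :
    optValue β cst P 0 k γ = fun x => ⨅ a, stageValue (cst k) (P k) γ 1 x a := by
  simp [optValue]

theorem optValue_succ_eq (m k : ℕ) (γ : ℝ) :
    optValue β cst P (m + 1) k γ = fun x =>
      ⨅ a, stageValue (cst k) (P k) γ (optValue β cst P m (k + 1) (γ * β)) x a :=
  rfl

variable [MeasurableSpace A]

theorem Vfin_zero_eq (π : ℕ → Kernel X A) (k : ℕ) (γ : ℝ) :
    Vfin β cst (fun t x a => (P t x a : Measure X)) π 0 k γ =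
      fun x => ∫ a, stageValue (cst k) (P k) γ 1 x a ∂π k x := by
  simp [Vfin]

theorem Vfin_succ_eq (π : ℕ → Kernel X A) (m k : ℕ) (γ : ℝ) :
    Vfin β cst (fun t x a => (P t x a : Measure X)) π (m + 1) k γ = fun x =>
      ∫ a, stageValue (cst k) (P k) γ
        (Vfin β cst (fun t x a => (P t x a : Measure X)) π m (k + 1) (γ * β)) x a ∂π k x :=
  rfl

noncomputable def MPol.updateDeterministic (π : MPol X A) (k : ℕ) {σ : X → A}
    (hσ : Measurable σ) : MPol X A :=
  ⟨update π.1 k (Kernel.deterministic σ hσ), fun t => by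
    rcases eq_or_ne t k with rfl | ht
    · rw [update_self]; infer_instance
    · rw [update_of_ne ht]; exact π.2 t⟩

end Recursion

theorem Vfin_congr {X A : Type*} [MeasurableSpace X] [MeasurableSpace A] {β : ℝ}
    {cst : ℕ → X → A → ℝ} {pk : ℕ → X → A → Measure X} {π π' : ℕ → Kernel X A} (m : ℕ) :
    ∀ k, (∀ t, k ≤ t → π t = π' t) → ∀ γ, Vfin β cst pk π m k γ = Vfin β cst pk π' m k γ := by
  induction m with
  | zero => intro k h γ; funext x; simp only [Vfin, h k le_rfl]
  | succ m ih =>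
    intro k h γ; funext x
    simp only [Vfin, h k le_rfl, ih (k + 1) fun t ht => h t (by omega)]

theorem continuous_optValue_and_mem_Icc {X A : Type*} [TopologicalSpace X] [MeasurableSpace X]
    [OpensMeasurableSpace X] [TopologicalSpace A] [CompactSpace A] [Nonempty A] {β K : ℝ}
    {cst : ℕ → X → A → ℝ} {P : ℕ → X → A → ProbabilityMeasure X} (hM : IsRegularModel K cst P)
    (hβ : 0 ≤ β) (m : ℕ) :
    ∀ k γ, 0 ≤ γ → Continuous (optValue β cst P m k γ) ∧
      ∀ x, optValue β cst P m k γ x ∈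
        Icc 0 (Real.exp (γ * K * ∑ j ∈ Finset.range (m + 1), β ^ j)) := by
  induction m with
  | zero =>
    intro k γ hγ
    rw [optValue_zero_eq]
    refine ⟨continuous_iInf_of_compactSpace (continuous_stageValue (hM.continuous_cost k)
      (hM.continuous_transition k) continuous_one one_apply_mem_Icc), fun x => ?_⟩
    simpa using iInf_stageValue_mem_Icc (Q := P k) hγ (hM.cost_le k) measurable_one one_apply_mem_Icc x
  | succ m ih =>
    intro k γ hγ
    obtain ⟨hc, hb⟩ := ih (k + 1) (γ * β) (by positivity)
    rw [← exp_mul_exp_mul_geom_sum]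
    exact ⟨continuous_iInf_of_compactSpace (continuous_stageValue
      (hM.continuous_cost k) (hM.continuous_transition k) hc hb),
      iInf_stageValue_mem_Icc hγ (hM.cost_le k) hc.measurable hb⟩

section DynamicProgramming

variable {X A : Type*} [TopologicalSpace X] [MeasurableSpace X] [BorelSpace X]
  [TopologicalSpace.PseudoMetrizableSpace X] [TopologicalSpace A] [MeasurableSpace A]
  [OpensMeasurableSpace A] [SecondCountableTopology A] {β K : ℝ} {cst : ℕ → X → A → ℝ}
  {P : ℕ → X → A → ProbabilityMeasure X}

theorem measurable_Vfin_and_mem_Icc (hM : IsRegularModel K cst P) (hβ : 0 ≤ β)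
    {π : ℕ → Kernel X A} (hπ : ∀ t, IsMarkovKernel (π t)) (m : ℕ) :
    ∀ k γ, 0 ≤ γ → Measurable (Vfin β cst (fun t x a => (P t x a : Measure X)) π m k γ) ∧
      ∀ x, Vfin β cst (fun t x a => (P t x a : Measure X)) π m k γ x ∈
        Icc 0 (Real.exp (γ * K * ∑ j ∈ Finset.range (m + 1), β ^ j)) := by
  induction m with
  | zero =>
    intro k γ hγ
    rw [Vfin_zero_eq]
    refine ⟨measurable_integral_stageValue (π k) (hM.continuous_cost k)
      (hM.continuous_transition k) measurable_one, fun x => ?_⟩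
    simpa using integral_stageValue_mem_Icc hγ (hM.cost_le k) (hM.continuous_cost k)
      (hM.continuous_transition k) measurable_one one_apply_mem_Icc x (π k x)
  | succ m ih =>
    intro k γ hγ
    obtain ⟨hm, hb⟩ := ih (k + 1) (γ * β) (by positivity)
    rw [← exp_mul_exp_mul_geom_sum]
    exact ⟨measurable_integral_stageValue (π k) (hM.continuous_cost k)
      (hM.continuous_transition k) hm, fun x => integral_stageValue_mem_Icc hγ (hM.cost_le k)
      (hM.continuous_cost k) (hM.continuous_transition k) hm hb x (π k x)⟩

theorem Vfin_updateDeterministic_succ {k : ℕ} (hc : Continuous ↿(cst k)) (hQ : Continuous ↿(P k))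
    (π : MPol X A) {σ : X → A} (hσ : Measurable σ) {m : ℕ} {γ : ℝ}
    (hm : Measurable (Vfin β cst (fun t x a => (P t x a : Measure X)) π.1 m (k + 1) (γ * β)))
    (x : X) :
    Vfin β cst (fun t x a => (P t x a : Measure X)) (π.updateDeterministic k hσ).1 (m + 1) k γ x =
      stageValue (cst k) (P k) γ
        (Vfin β cst (fun t x a => (P t x a : Measure X)) π.1 m (k + 1) (γ * β)) x (σ x) := by
  rw [Vfin_succ_eq, Vfin_congr m (k + 1) fun t ht => update_of_ne (Nat.lt_of_succ_le ht).ne' _ _]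
  simp only [MPol.updateDeterministic, update_self]
  exact integral_stageValue_deterministic hc hQ hm hσ x

variable [CompactSpace A] [Nonempty A]

theorem optValue_le_Vfin (hM : IsRegularModel K cst P) (hβ : 0 ≤ β) {π : ℕ → Kernel X A}
    (hπ : ∀ t, IsMarkovKernel (π t)) (m : ℕ) :
    ∀ k γ, 0 ≤ γ → ∀ x,
      optValue β cst P m k γ x ≤ Vfin β cst (fun t x a => (P t x a : Measure X)) π m k γ x := by
  induction m with
  | zero =>
    intro k γ hγ x
    rw [optValue_zero_eq, Vfin_zero_eq]
    exact iInf_stageValue_le_integral hγ (hM.cost_le k) (hM.continuous_cost k)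
      (hM.continuous_transition k) measurable_one measurable_one one_apply_mem_Icc one_apply_mem_Icc le_rfl x (π k x)
  | succ m ih =>
    intro k γ hγ x
    have hγβ : 0 ≤ γ * β := by positivity
    obtain ⟨hc, hb⟩ := continuous_optValue_and_mem_Icc hM hβ m (k + 1) (γ * β) hγβ
    obtain ⟨hm, hb'⟩ := measurable_Vfin_and_mem_Icc hM hβ hπ m (k + 1) (γ * β) hγβ
    exact iInf_stageValue_le_integral hγ (hM.cost_le k) (hM.continuous_cost k)
      (hM.continuous_transition k) hc.measurable hm hb hb' (ih (k + 1) (γ * β) hγβ) x (π k x)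

theorem exists_Vfin_le_optValue_add (hM : IsRegularModel K cst P) (hβ : 0 ≤ β) (m : ℕ) :
    ∀ k γ, 0 ≤ γ → ∀ ε, 0 < ε → ∃ π : MPol X A, ∀ x,
      Vfin β cst (fun t x a => (P t x a : Measure X)) π.1 m k γ x ≤
        optValue β cst P m k γ x + ε := by
  induction m with
  | zero =>
    intro k γ hγ ε hε
    obtain ⟨σ, hσ, hσle⟩ := exists_measurable_stageValue_le hγ (hM.cost_le k)
      (hM.continuous_cost k) (hM.continuous_transition k) continuous_one measurable_one one_apply_mem_Icc one_apply_mem_Icc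
      le_rfl (fun _ => (add_zero _).ge) hε
    refine ⟨⟨fun _ => Kernel.deterministic σ hσ, fun _ => inferInstance⟩, fun x => ?_⟩
    rw [Vfin_zero_eq, optValue_zero_eq]
    dsimp only
    rw [integral_stageValue_deterministic (hM.continuous_cost k) (hM.continuous_transition k)
      measurable_one hσ]
    simpa using hσle x
  | succ m ih =>
    intro k γ hγ ε hε
    have hγβ : 0 ≤ γ * β := by positivity
    have hexp : 0 < Real.exp (γ * K) := Real.exp_pos _
    -- the tail error is multiplied by at most `e^{γK}` at stage `k`
    obtain ⟨π', hπ'⟩ := ih (k + 1) (γ * β) hγβ (ε / (2 * Real.exp (γ * K))) (by positivity)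
    obtain ⟨hc, hb⟩ := continuous_optValue_and_mem_Icc hM hβ m (k + 1) (γ * β) hγβ
    obtain ⟨hm, hb'⟩ := measurable_Vfin_and_mem_Icc hM hβ π'.2 m (k + 1) (γ * β) hγβ
    obtain ⟨σ, hσ, hσle⟩ := exists_measurable_stageValue_le hγ (hM.cost_le k)
      (hM.continuous_cost k) (hM.continuous_transition k) hc hm hb hb' (by positivity) hπ'
      (half_pos hε)
    refine ⟨π'.updateDeterministic k hσ, fun x => ?_⟩
    rw [Vfin_updateDeterministic_succ (hM.continuous_cost k) (hM.continuous_transition k) π' hσ hm]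
    calc _ ≤ _ := hσle x
      _ = optValue β cst P (m + 1) k γ x + ε := by rw [optValue_succ_eq]; field_simp; ring

theorem iInf_Vfin_eq_optValue (hM : IsRegularModel K cst P) (hβ : 0 ≤ β) {γ : ℝ} (hγ : 0 ≤ γ)
    (m k : ℕ) (x : X) :
    ⨅ π : MPol X A, Vfin β cst (fun t x a => (P t x a : Measure X)) π.1 m k γ x =
      optValue β cst P m k γ x := by
  have : Nonempty (MPol X A) :=
    ⟨⟨fun _ => Kernel.const X (Measure.dirac (Classical.arbitrary A)), fun _ => inferInstance⟩⟩
  refine le_antisymm (le_of_forall_pos_le_add fun ε hε => ?_)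
    (le_ciInf fun π => optValue_le_Vfin hM hβ π.2 m k γ hγ x)
  obtain ⟨π, hπ⟩ := exists_Vfin_le_optValue_add hM hβ m k γ hγ ε hε
  refine (ciInf_le ⟨0, forall_mem_range.2 fun π' => ?_⟩ π).trans (hπ x)
  exact ((measurable_Vfin_and_mem_Icc hM hβ π'.2 m k γ hγ).2 x).1

theorem JoptFin_eq_optValue (hM : IsRegularModel K cst P) (hβ : 0 ≤ β) {lam : ℝ} (hlam : 0 ≤ lam)
    (k n : ℕ) :
    JoptFin β lam cst (fun t x a => (P t x a : Measure X)) k n =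
      optValue β cst P (n - k) k (lam * β ^ k) :=
  funext fun x => iInf_Vfin_eq_optValue hM hβ (by positivity) _ _ x

end DynamicProgramming

theorem finite_horizon_value_continuous_bounded_general
    {X A : Type*} [TopologicalSpace X] [PolishSpace X] [MeasurableSpace X] [BorelSpace X]
    [MetricSpace A] [CompactSpace A] [Nonempty A] [MeasurableSpace A] [BorelSpace A]
    (p : X → A → ProbabilityMeasure X → ProbabilityMeasure X)
    (hp : Continuous fun q : X × A × ProbabilityMeasure X => p q.1 q.2.1 q.2.2)
    (c : X → A → ProbabilityMeasure X → ℝ)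
    (hc : Continuous fun q : X × A × ProbabilityMeasure X => c q.1 q.2.1 q.2.2)
    (K : ℝ) (hcK : ∀ x a μ, c x a μ ≤ K)
    (β lam : ℝ) (hβ0 : 0 < β) (hβ1 : β < 1) (hlam : 0 < lam)
    (μflow : ℕ → ProbabilityMeasure X) :
    ∀ k n : ℕ, k ≤ n →
      (Continuous (JoptFin β lam (fun t x a => c x a (μflow t))
          (fun t x a => (p x a (μflow t) : Measure X)) k n) ∧
        (∀ x, |JoptFin β lam (fun t x a => c x a (μflow t))
            (fun t x a => (p x a (μflow t) : Measure X)) k n x| ≤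
          Real.exp (lam * K * ∑ t ∈ Finset.Icc k n, β ^ t)) ∧
        (∑ t ∈ Finset.Icc k n, β ^ t) < 1 / (1 - β)) ∧
      (∀ x, JoptFin β lam (fun t x a => c x a (μflow t))
          (fun t x a => (p x a (μflow t) : Measure X)) n n x =
        ⨅ a : A, Real.exp (lam * β ^ n * c x a (μflow n))) ∧
      (k < n → ∀ x, JoptFin β lam (fun t x a => c x a (μflow t))
          (fun t x a => (p x a (μflow t) : Measure X)) k n x =
        ⨅ a : A, Real.exp (lam * β ^ k * c x a (μflow k)) *
          ∫ y, JoptFin β lam (fun t x a => c x a (μflow t))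
              (fun t x a => (p x a (μflow t) : Measure X)) (k + 1) n y
            ∂(p x a (μflow k) : Measure X)) := by
  intro k n hkn
  have hM : IsRegularModel K (fun t x a => c x a (μflow t)) (fun t x a => p x a (μflow t)) :=
    ⟨fun t => hc.comp (continuous_fst.prodMk (continuous_snd.prodMk continuous_const)),
      fun t x a => hcK x a _,
      fun t => hp.comp (continuous_fst.prodMk (continuous_snd.prodMk continuous_const))⟩
  have hJ := JoptFin_eq_optValue hM hβ0.le hlam.le
  obtain ⟨hcont, hbd⟩ :=
    continuous_optValue_and_mem_Icc hM hβ0.le (n - k) k (lam * β ^ k) (by positivity)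
  refine ⟨⟨?_, fun x => ?_, sum_Icc_pow_lt_one_div hβ0 hβ1 k n⟩, fun x => ?_, fun hlt x => ?_⟩
  · rw [hJ]; exact hcont
  · rw [hJ, abs_of_nonneg (hbd x).1, sum_Icc_pow_eq_pow_mul_geom_sum β hkn, ← mul_assoc,
      mul_right_comm lam]
    exact (hbd x).2
  · rw [hJ, Nat.sub_self]; rfl
  · rw [hJ, hJ, show n - k = n - (k + 1) + 1 by omega, optValue_succ_eq, pow_succ, ← mul_assoc]
    rfl

/-- for all `n ≥ k ≥ 0` the finite-horizon optimal value function
`J_k^n(·, λβ^k)` is continuous and bounded with sup-norm at most `e^{λK ζ_{k,n}}`, where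
`ζ_{k,n} = Σ_{t=k}^n β^t < 1/(1−β)`, and these functions satisfy the backward recursion
`J_n^n(x,λβ^n) = inf_a e^{λβ^n c_n(x,a)}` and
`J_k^n(x,λβ^k) = inf_a [e^{λβ^k c_k(x,a)} ∫ J_{k+1}^n(y,λβ^{k+1}) p_k(dy|x,a)]` for `k < n`. -/
theorem finite_horizon_value_continuous_bounded
    {X A : Type*} [TopologicalSpace X] [PolishSpace X] [MeasurableSpace X] [BorelSpace X]
    [MetricSpace A] [CompactSpace A] [Nonempty A] [MeasurableSpace A] [BorelSpace A]
    [SecondCountableTopology A]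
    (p : X → A → ProbabilityMeasure X → ProbabilityMeasure X)
    (hp : Continuous fun q : X × A × ProbabilityMeasure X => p q.1 q.2.1 q.2.2)
    (c : X → A → ProbabilityMeasure X → ℝ)
    (hc : Continuous fun q : X × A × ProbabilityMeasure X => c q.1 q.2.1 q.2.2)
    (K : ℝ) (hc0 : ∀ x a μ, 0 ≤ c x a μ) (hcK : ∀ x a μ, c x a μ ≤ K)
    (β lam : ℝ) (hβ0 : 0 < β) (hβ1 : β < 1) (hlam : 0 < lam)
    (μflow : ℕ → ProbabilityMeasure X) :
    ∀ k n : ℕ, k ≤ n →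
      (Continuous (JoptFin β lam (fun t x a => c x a (μflow t))
          (fun t x a => (p x a (μflow t) : Measure X)) k n) ∧
        (∀ x, |JoptFin β lam (fun t x a => c x a (μflow t))
            (fun t x a => (p x a (μflow t) : Measure X)) k n x| ≤
          Real.exp (lam * K * ∑ t ∈ Finset.Icc k n, β ^ t)) ∧
        (∑ t ∈ Finset.Icc k n, β ^ t) < 1 / (1 - β)) ∧
      (∀ x, JoptFin β lam (fun t x a => c x a (μflow t))
          (fun t x a => (p x a (μflow t) : Measure X)) n n x =
        ⨅ a : A, Real.exp (lam * β ^ n * c x a (μflow n))) ∧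
      (k < n → ∀ x, JoptFin β lam (fun t x a => c x a (μflow t))
          (fun t x a => (p x a (μflow t) : Measure X)) k n x =
        ⨅ a : A, Real.exp (lam * β ^ k * c x a (μflow k)) *
          ∫ y, JoptFin β lam (fun t x a => c x a (μflow t))
              (fun t x a => (p x a (μflow t) : Measure X)) (k + 1) n y
            ∂(p x a (μflow k) : Measure X)) :=
  finite_horizon_value_continuous_bounded_general p hp c hc K hcK β lam hβ0 hβ1 hlam μflow

end RSMFG
end

section
/- Let (Ω, 𝓕, P) be a probability space, let K ≥ 0, λ > 0 and β ∈ (0,1), and let (c_t)_{t≥0} be measurable random variables with 0 ≤ c_t ≤ K for all t. Then for every n ≥ 0: E[exp(λ Σ_{t=0}^n β^t c_t)] ≤ E[exp(λ Σ_{t=0}^∞ β^t c_t)] ≤ E[exp(λ Σ_{t=0}^n β^t c_t)] + (λK/(1−β)) e^{λK/(1−β)} β^{n+1}. -/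
/-!
Write `S` for the infinite discounted sum and `Sₙ` for its partial sum up to `n`. Pointwise,
`Sₙ ≤ S ≤ K / (1 - β)` and the tail `S - Sₙ` is at most `K β^{n+1} / (1 - β)`. Convexity of `exp`
in the form `e^y - e^x ≤ (y - x) e^y` turns the tail bound into
`e^{λS} ≤ e^{λSₙ} + (λK / (1 - β)) β^{n+1} e^{λK / (1 - β)}`; integrating gives the estimate.
-/

open MeasureTheory Finset

lemma Real.exp_le_exp_add_sub_mul_exp (x y : ℝ) :
    Real.exp y ≤ Real.exp x + (y - x) * Real.exp y := by
  have hexp : (x - y + 1) * Real.exp y ≤ Real.exp (x - y) * Real.exp y :=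
    mul_le_mul_of_nonneg_right (Real.add_one_le_exp _) (Real.exp_pos y).le
  rw [← Real.exp_add, sub_add_cancel] at hexp
  linarith

section DiscountedSum

variable {β K : ℝ} {f : ℕ → ℝ}

lemma summable_pow_mul_of_nonneg_of_le (hβ0 : 0 ≤ β) (hβ1 : β < 1)
    (hf0 : ∀ t, 0 ≤ f t) (hfK : ∀ t, f t ≤ K) : Summable fun t ↦ β ^ t * f t :=
  (summable_geometric_of_lt_one hβ0 hβ1).mul_right K |>.of_nonneg_of_le
    (fun t ↦ mul_nonneg (pow_nonneg hβ0 t) (hf0 t))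
    (fun t ↦ mul_le_mul_of_nonneg_left (hfK t) (pow_nonneg hβ0 t))

lemma sum_range_pow_mul_le_tsum (hβ0 : 0 ≤ β) (hβ1 : β < 1)
    (hf0 : ∀ t, 0 ≤ f t) (hfK : ∀ t, f t ≤ K) (m : ℕ) :
    ∑ t ∈ range m, β ^ t * f t ≤ ∑' t, β ^ t * f t :=
  (summable_pow_mul_of_nonneg_of_le hβ0 hβ1 hf0 hfK).sum_le_tsum _
    fun t _ ↦ mul_nonneg (pow_nonneg hβ0 t) (hf0 t)

lemma tsum_pow_mul_sub_sum_range_le (hβ0 : 0 ≤ β) (hβ1 : β < 1)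
    (hf0 : ∀ t, 0 ≤ f t) (hfK : ∀ t, f t ≤ K) (m : ℕ) :
    ∑' t, β ^ t * f t - ∑ t ∈ range m, β ^ t * f t ≤ K * β ^ m / (1 - β) := by
  have hsum := summable_pow_mul_of_nonneg_of_le hβ0 hβ1 hf0 hfK
  rw [← hsum.sum_add_tsum_nat_add m, add_sub_cancel_left]
  calc ∑' t, β ^ (t + m) * f (t + m)
      ≤ ∑' t, K * β ^ m * β ^ t := by
        refine (summable_nat_add_iff m |>.mpr hsum).tsum_le_tsum (fun t ↦ ?_)
          ((summable_geometric_of_lt_one hβ0 hβ1).mul_left _)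
        rw [mul_assoc, ← pow_add, add_comm m, mul_comm K]
        exact mul_le_mul_of_nonneg_left (hfK _) (pow_nonneg hβ0 _)
    _ = K * β ^ m / (1 - β) := by
        rw [tsum_mul_left, tsum_geometric_of_lt_one hβ0 hβ1, div_eq_mul_inv]

lemma tsum_pow_mul_le (hβ0 : 0 ≤ β) (hβ1 : β < 1)
    (hf0 : ∀ t, 0 ≤ f t) (hfK : ∀ t, f t ≤ K) :
    ∑' t, β ^ t * f t ≤ K / (1 - β) := by
  simpa using tsum_pow_mul_sub_sum_range_le hβ0 hβ1 hf0 hfK 0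

end DiscountedSum

section ExpIntegral

variable {Ω : Type*} [MeasurableSpace Ω] {P : Measure Ω} {X Y : Ω → ℝ} {M δ : ℝ}

lemma integrable_exp_of_le [IsFiniteMeasure P] (hX : Measurable X) (hXM : ∀ ω, X ω ≤ M) :
    Integrable (fun ω ↦ Real.exp (X ω)) P :=
  .of_bound (Real.measurable_exp.comp hX).aestronglyMeasurable (Real.exp M) <|
    .of_forall fun ω ↦ by
      rw [Real.norm_eq_abs, abs_of_pos (Real.exp_pos _)]
      exact Real.exp_le_exp.mpr (hXM ω)

lemma integral_exp_le_integral_exp_add [IsProbabilityMeasure P]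
    (hX : Measurable X) (hY : Measurable Y) (hXY : ∀ ω, X ω ≤ Y ω) (hYM : ∀ ω, Y ω ≤ M)
    (hδ : ∀ ω, Y ω - X ω ≤ δ) :
    ∫ ω, Real.exp (Y ω) ∂P ≤ ∫ ω, Real.exp (X ω) ∂P + δ * Real.exp M := by
  have hintX := integrable_exp_of_le (P := P) hX fun ω ↦ (hXY ω).trans (hYM ω)
  have hpointwise (ω : Ω) : Real.exp (Y ω) ≤ Real.exp (X ω) + δ * Real.exp M :=
    (Real.exp_le_exp_add_sub_mul_exp (X ω) (Y ω)).trans <| add_le_add_right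
      (mul_le_mul (hδ ω) (Real.exp_le_exp.mpr (hYM ω)) (Real.exp_pos _).le
        ((sub_nonneg.mpr (hXY ω)).trans (hδ ω))) _
  calc ∫ ω, Real.exp (Y ω) ∂P
      ≤ ∫ ω, (Real.exp (X ω) + δ * Real.exp M) ∂P :=
        integral_mono (integrable_exp_of_le hY hYM) (hintX.add (integrable_const _)) hpointwise
    _ = ∫ ω, Real.exp (X ω) ∂P + δ * Real.exp M := by
        rw [integral_add hintX (integrable_const _), integral_const, probReal_univ, one_smul]

end ExpIntegral

theorem risk_sensitive_tail_estimate_general {Ω : Type*} [MeasurableSpace Ω]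
    (P : Measure Ω) [IsProbabilityMeasure P]
    (K lam β : ℝ) (hlam : 0 < lam) (hβ0 : 0 < β) (hβ1 : β < 1)
    (c : ℕ → Ω → ℝ) (hmeas : ∀ t, Measurable (c t))
    (hc0 : ∀ t ω, 0 ≤ c t ω) (hcK : ∀ t ω, c t ω ≤ K) (n : ℕ) :
    (∫ ω, Real.exp (lam * ∑ t ∈ Finset.range (n + 1), β ^ t * c t ω) ∂P ≤
       ∫ ω, Real.exp (lam * ∑' t : ℕ, β ^ t * c t ω) ∂P) ∧
    (∫ ω, Real.exp (lam * ∑' t : ℕ, β ^ t * c t ω) ∂P ≤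
       ∫ ω, Real.exp (lam * ∑ t ∈ Finset.range (n + 1), β ^ t * c t ω) ∂P +
         (lam * K / (1 - β)) * Real.exp (lam * K / (1 - β)) * β ^ (n + 1)) := by
  have hmeasβ (t : ℕ) : Measurable fun ω ↦ β ^ t * c t ω := (hmeas t).const_mul _
  have hX : Measurable fun ω ↦ lam * ∑ t ∈ range (n + 1), β ^ t * c t ω :=
    (Finset.measurable_sum _ fun t _ ↦ hmeasβ t).const_mul lam
  have hY : Measurable fun ω ↦ lam * ∑' t, β ^ t * c t ω :=
    (Measurable.tsum hmeasβ).const_mul lam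
  have hXY (ω : Ω) := mul_le_mul_of_nonneg_left
    (sum_range_pow_mul_le_tsum hβ0.le hβ1 (hc0 · ω) (hcK · ω) (n + 1)) hlam.le
  have hYM (ω : Ω) : lam * ∑' t, β ^ t * c t ω ≤ lam * K / (1 - β) := by
    rw [mul_div_assoc]
    exact mul_le_mul_of_nonneg_left (tsum_pow_mul_le hβ0.le hβ1 (hc0 · ω) (hcK · ω)) hlam.le
  have hδ (ω : Ω) : lam * ∑' t, β ^ t * c t ω - lam * ∑ t ∈ range (n + 1), β ^ t * c t ω ≤
      lam * K / (1 - β) * β ^ (n + 1) := by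
    calc _ = lam * (∑' t, β ^ t * c t ω - ∑ t ∈ range (n + 1), β ^ t * c t ω) := by ring
      _ ≤ lam * (K * β ^ (n + 1) / (1 - β)) := mul_le_mul_of_nonneg_left
          (tsum_pow_mul_sub_sum_range_le hβ0.le hβ1 (hc0 · ω) (hcK · ω) (n + 1)) hlam.le
      _ = lam * K / (1 - β) * β ^ (n + 1) := by ring
  refine ⟨integral_mono (integrable_exp_of_le hX fun ω ↦ (hXY ω).trans (hYM ω))
    (integrable_exp_of_le hY hYM) fun ω ↦ Real.exp_le_exp.mpr (hXY ω), ?_⟩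
  convert integral_exp_le_integral_exp_add (P := P) hX hY hXY hYM hδ using 2
  ring

/-- key quantitative tail estimate for risk-sensitive discounted costs.
If `0 ≤ c_t ≤ K`, `λ > 0`, `β ∈ (0,1)`, then for every `n`,
`E[exp(λ Σ_{t=0}^n β^t c_t)] ≤ E[exp(λ Σ_{t=0}^∞ β^t c_t)]
  ≤ E[exp(λ Σ_{t=0}^n β^t c_t)] + (λK/(1−β)) e^{λK/(1−β)} β^{n+1}`. -/
theorem risk_sensitive_tail_estimate {Ω : Type*} [MeasurableSpace Ω]
    (P : Measure Ω) [IsProbabilityMeasure P]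
    (K lam β : ℝ) (hK : 0 ≤ K) (hlam : 0 < lam) (hβ0 : 0 < β) (hβ1 : β < 1)
    (c : ℕ → Ω → ℝ) (hmeas : ∀ t, Measurable (c t))
    (hc0 : ∀ t ω, 0 ≤ c t ω) (hcK : ∀ t ω, c t ω ≤ K) (n : ℕ) :
    (∫ ω, Real.exp (lam * ∑ t ∈ Finset.range (n + 1), β ^ t * c t ω) ∂P ≤
       ∫ ω, Real.exp (lam * ∑' t : ℕ, β ^ t * c t ω) ∂P) ∧
    (∫ ω, Real.exp (lam * ∑' t : ℕ, β ^ t * c t ω) ∂P ≤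
       ∫ ω, Real.exp (lam * ∑ t ∈ Finset.range (n + 1), β ^ t * c t ω) ∂P +
         (lam * K / (1 - β)) * Real.exp (lam * K / (1 - β)) * β ^ (n + 1)) :=
  risk_sensitive_tail_estimate_general P K lam β hlam hβ0 hβ1 c hmeas hc0 hcK n
end

section
/- Let E be a metric space, let (ξ_n)_{n≥1} and ξ be Borel probability measures on E with ξ_n converging weakly to ξ, and let F_n, F, J_n, J : E → ℝ be continuous functions that are uniformly bounded (sup_n (‖F_n‖_∞ + ‖J_n‖_∞) < ∞, and F, J bounded) such that F_n ≥ J_n pointwise for every n, F_n converges to F continuously (i.e. F_n(e_n) → F(e) whenever e_n → e in E) and J_n converges to J continuously. If ξ_n({e : F_n(e) = J_n(e)}) = 1 for every n, then ξ({e : F(e) = J(e)}) = 1. -/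
open MeasureTheory Filter Topology

/-! Put `G n = F n - J n ≥ 0`. Continuous convergence makes `G n → Flim - Jlim` jointly as
`(n, e) → (∞, e)`, so every point `e` with `Flim e > Jlim e` has a neighbourhood that misses
`{F n = J n}` for all `n ≥ N`, for some `N`. For fixed `N` the union `U_N` of such neighbourhoods
is open and `ξseq n`-null for `n ≥ N`, hence `ξ`-null by the portmanteau inequality
`ξ U ≤ liminf ξseq n U`; and the countably many `U_N` cover `{Flim ≠ Jlim}`. -/

theorem tendsto_uncurry_atTop_prod_nhds {X Y : Type*} [TopologicalSpace X]
    [FirstCountableTopology X] [TopologicalSpace Y] {G : ℕ → X → Y} {x : X} {y : Y}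
    (h : ∀ u : ℕ → X, Tendsto u atTop (𝓝 x) → Tendsto (fun n => G n (u n)) atTop (𝓝 y)) :
    Tendsto (Function.uncurry G) (atTop ×ˢ 𝓝 x) (𝓝 y) := by
  by_contra hG
  obtain ⟨V, hV, hbad⟩ := not_tendsto_iff_exists_frequently_notMem.1 hG
  obtain ⟨s, hs⟩ := (𝓝 x).exists_antitone_basis
  have hfreq : ∀ k, ∃ᶠ n in atTop, ∃ z ∈ s k, G n z ∉ V := fun k hk =>
    hbad (eventually_prod_iff.2 ⟨_, hk, _, hs.mem k, fun hn z hz hzV => hn ⟨z, hz, hzV⟩⟩)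
  obtain ⟨φ, hφ, hφbad⟩ := extraction_forall_of_frequently hfreq
  choose z hz hzV using hφbad
  set u := Function.extend φ z (fun _ => x)
  have hu : ∀ k, u (φ k) = z k := fun k => hφ.injective.extend_apply z _ k
  have hu_lim : Tendsto u atTop (𝓝 x) := by
    refine hs.tendsto_right_iff.2 fun k _ => eventually_atTop.2 ⟨φ k, fun n hn => ?_⟩
    by_cases hn' : ∃ j, φ j = n
    · obtain ⟨j, rfl⟩ := hn'
      rw [hu]
      exact hs.antitone (hφ.le_iff_le.1 hn) (hz j)
    · rw [show u n = x from Function.extend_apply' _ _ _ hn']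
      exact mem_of_mem_nhds (hs.mem k)
  obtain ⟨k, hk⟩ := (((h u hu_lim).comp hφ.tendsto_atTop).eventually hV).exists
  have hk' : G (φ k) (u (φ k)) ∈ V := hk
  exact hzV k (hu k ▸ hk')

theorem measure_eq_zero_of_disjoint_of_measure_eq_one {Ω : Type*} [MeasurableSpace Ω]
    {μ : Measure Ω} [IsProbabilityMeasure μ] {s t : Set Ω} (hs : MeasurableSet s)
    (hst : Disjoint s t) (ht : μ t = 1) : μ s = 0 := by
  have h := prob_le_one (μ := μ) (s := s ∪ t)
  rw [measure_union' hst hs, ht] at h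
  exact nonpos_iff_eq_zero.1 ((ENNReal.add_le_add_iff_right ENNReal.one_ne_top).1
    (by rwa [zero_add]))

theorem ProbabilityMeasure.measure_iUnion_interior_iInter_compl_eq_zero {Ω : Type*}
    [MeasurableSpace Ω] [TopologicalSpace Ω] [OpensMeasurableSpace Ω] [HasOuterApproxClosed Ω]
    {μs : ℕ → ProbabilityMeasure Ω} {μ : ProbabilityMeasure Ω} (hμ : Tendsto μs atTop (𝓝 μ))
    {S : ℕ → Set Ω} (hS : ∀ n, (μs n : Measure Ω) (S n) = 1) :
    (μ : Measure Ω) (⋃ N, interior (⋂ n ≥ N, (S n)ᶜ)) = 0 := by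
  refine measure_iUnion_null fun N => ?_
  have hnull : ∀ n ≥ N, (μs n : Measure Ω) (interior (⋂ n ≥ N, (S n)ᶜ)) = 0 := fun n hn =>
    measure_eq_zero_of_disjoint_of_measure_eq_one isOpen_interior.measurableSet
      (Set.subset_compl_iff_disjoint_right.1 (interior_subset.trans (Set.iInter₂_subset n hn)))
      (hS n)
  refine nonpos_iff_eq_zero.1 ((ProbabilityMeasure.le_liminf_measure_open_of_tendsto hμ
    isOpen_interior).trans ?_)
  rw [liminf_congr (eventually_atTop.2 ⟨N, hnull⟩)]
  simp

theorem measure_eq_set_of_continuous_convergence_general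
    {E : Type*} [MetricSpace E] [MeasurableSpace E] [BorelSpace E]
    (ξseq : ℕ → ProbabilityMeasure E) (ξ : ProbabilityMeasure E)
    (hconv : Tendsto ξseq atTop (𝓝 ξ))
    (F J : ℕ → E → ℝ) (Flim Jlim : E → ℝ)
    (hge : ∀ n e, J n e ≤ F n e)
    (hFcc : ∀ (e : E) (u : ℕ → E), Tendsto u atTop (𝓝 e) →
      Tendsto (fun n => F n (u n)) atTop (𝓝 (Flim e)))
    (hJcc : ∀ (e : E) (u : ℕ → E), Tendsto u atTop (𝓝 e) →
      Tendsto (fun n => J n (u n)) atTop (𝓝 (Jlim e)))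
    (heq : ∀ n, (ξseq n : Measure E) {e | F n e = J n e} = 1) :
    (ξ : Measure E) {e | Flim e = Jlim e} = 1 := by
  have hsub : {e | Flim e = Jlim e}ᶜ ⊆ ⋃ N, interior (⋂ n ≥ N, {e | F n e = J n e}ᶜ) := by
    intro e (he : Flim e ≠ Jlim e)
    have hle : Jlim e ≤ Flim e := le_of_tendsto_of_tendsto' (hJcc e _ tendsto_const_nhds)
      (hFcc e _ tendsto_const_nhds) (fun n => hge n e)
    have hjoint : Tendsto (fun p : ℕ × E => F p.1 p.2 - J p.1 p.2) (atTop ×ˢ 𝓝 e)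
        (𝓝 (Flim e - Jlim e)) :=
      tendsto_uncurry_atTop_prod_nhds (G := fun n e => F n e - J n e) fun u hu =>
        (hFcc e u hu).sub (hJcc e u hu)
    obtain ⟨_, hN, V, hV, hpos⟩ := eventually_prod_iff.1
      (hjoint.eventually (Ioi_mem_nhds (sub_pos.2 (hle.lt_of_ne' he))))
    obtain ⟨N, hN⟩ := eventually_atTop.1 hN
    refine Set.mem_iUnion.2 ⟨N, mem_interior_iff_mem_nhds.2 (mem_of_superset hV fun y hy => ?_)⟩
    exact Set.mem_iInter₂.2 fun n hn hFJ => (hpos (hN n hn) hy).ne' (sub_eq_zero.2 hFJ)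
  have hnull := measure_mono_null hsub
    (ProbabilityMeasure.measure_iUnion_interior_iInter_compl_eq_zero hconv heq)
  rw [measure_congr (ae_eq_univ.2 hnull), measure_univ]

/-- if `ξ_n → ξ` weakly, `F_n, J_n` are continuous, uniformly bounded,
`F_n ≥ J_n`, `F_n → F` and `J_n → J` continuously (with `F, J` continuous and bounded),
and `ξ_n({F_n = J_n}) = 1` for all `n`, then `ξ({F = J}) = 1`. -/
theorem measure_eq_set_of_continuous_convergence
    {E : Type*} [MetricSpace E] [MeasurableSpace E] [BorelSpace E]
    (ξseq : ℕ → ProbabilityMeasure E) (ξ : ProbabilityMeasure E)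
    (hconv : Tendsto ξseq atTop (𝓝 ξ))
    (F J : ℕ → E → ℝ) (Flim Jlim : E → ℝ)
    (hFcont : ∀ n, Continuous (F n)) (hJcont : ∀ n, Continuous (J n))
    (hFlimcont : Continuous Flim) (hJlimcont : Continuous Jlim)
    (hFJbd : ∃ C, ∀ n e, |F n e| ≤ C ∧ |J n e| ≤ C)
    (hFlimbd : ∃ C, ∀ e, |Flim e| ≤ C) (hJlimbd : ∃ C, ∀ e, |Jlim e| ≤ C)
    (hge : ∀ n e, J n e ≤ F n e)
    (hFcc : ∀ (e : E) (u : ℕ → E), Tendsto u atTop (𝓝 e) →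
      Tendsto (fun n => F n (u n)) atTop (𝓝 (Flim e)))
    (hJcc : ∀ (e : E) (u : ℕ → E), Tendsto u atTop (𝓝 e) →
      Tendsto (fun n => J n (u n)) atTop (𝓝 (Jlim e)))
    (heq : ∀ n, (ξseq n : Measure E) {e | F n e = J n e} = 1) :
    (ξ : Measure E) {e | Flim e = Jlim e} = 1 :=
  measure_eq_set_of_continuous_convergence_general ξseq ξ hconv F J Flim Jlim hge hFcc hJcc heq
end
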